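/- arXiv:1506.03154 — 2 statements merged into one kernel-verified Lean document; each statement's English description precedes it below -/
import Mathlib

section
/- Let (X, d) be a metric space with the segment property, let x ∈ X, N ≥ 1, and let x₁, …, x_N ∈ X be points such that B(x, 1/2) ⊆ B(x₁, 1/4) ∪ … ∪ B(x_N, 1/4). Then for every real r ≥ 1/2 one has B(x, r + 1/4) ⊆ B(x₁, r) ∪ … ∪ B(x_N, r). -/
open Metric

/-- A metric space has the *segment property* if for all `y z` and `s ∈ [0, dist y z]` there is
a point `p` with `dist y p = s` and `dist p z = dist y z - s`. -/
def SegmentProperty (X : Type*) [MetricSpace X] : Prop :=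
  ∀ y z : X, ∀ s : ℝ, 0 ≤ s → s ≤ dist y z →
    ∃ p : X, dist y p = s ∧ dist p z = dist y z - s

/-- In a metric space with the segment property, if
`B(x, 1/2) ⊆ B(x₁, 1/4) ∪ … ∪ B(x_N, 1/4)`, then for every `r ≥ 1/2` one has
`B(x, r + 1/4) ⊆ B(x₁, r) ∪ … ∪ B(x_N, r)`. -/
theorem stmt_1 (X : Type) [MetricSpace X] (hseg : SegmentProperty X)
    (x : X) (N : ℕ) (hN : 1 ≤ N) (p : Fin N → X)
    (hcover : ball x (1/2) ⊆ ⋃ i : Fin N, ball (p i) (1/4)) :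
    ∀ r : ℝ, 1/2 ≤ r →
      ball x (r + 1/4) ⊆ ⋃ i : Fin N, ball (p i) r := by
  intro r hr z hz
  simp only [mem_ball, dist_comm] at hz
  by_cases hd : dist x z < 1/2
  · have : z ∈ ball x (1/2) := by simpa [mem_ball, dist_comm] using hd
    obtain ⟨s, ⟨i, rfl⟩, hzi⟩ := hcover this
    exact Set.mem_iUnion.2 ⟨i, ball_subset_ball (by linarith) hzi⟩
  · push_neg at hd
    obtain ⟨s, hs0, hslt, hst⟩ : ∃ s : ℝ, 0 ≤ s ∧ s < 1/2 ∧ dist x z - r + 1/4 < s := by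
      refine ⟨(max (dist x z - r + 1/4) 0 + 1/2) / 2, ?_, ?_, ?_⟩
      · have := le_max_right (dist x z - r + 1/4) 0
        linarith
      · have : max (dist x z - r + 1/4) 0 < 1/2 := max_lt (by linarith) (by norm_num)
        linarith
      · have := le_max_left (dist x z - r + 1/4) 0
        linarith
    have hsd : s ≤ dist x z := le_trans hslt.le hd
    obtain ⟨q, hq1, hq2⟩ := hseg x z s hs0 hsd
    have hq : q ∈ ball x (1/2) := by rw [mem_ball, dist_comm, hq1]; exact hslt
    obtain ⟨S, ⟨i, rfl⟩, hqi⟩ := hcover hq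
    refine Set.mem_iUnion.2 ⟨i, ?_⟩
    rw [mem_ball]
    calc dist z (p i) ≤ dist z q + dist q (p i) := dist_triangle _ _ _
      _ < (dist x z - s) + 1/4 := by
          rw [mem_ball] at hqi
          have : dist z q = dist x z - s := by rw [dist_comm, hq2]
          linarith
      _ < r := by linarith
end

section
/- Let X be a nonempty set equipped with two metrics d₁ and d₂ such that both (X, d₁) and (X, d₂) are compact metric spaces with the segment property, and let ε ≥ 0 be such that |d₁(x, y) − d₂(x, y)| ≤ ε for all x, y ∈ X. Then for every x ∈ X and every r > 0, the Gromov–Hausdorff distance between the closed ball {z : d₁(x, z) ≤ r} with the metric d₁ and the closed ball {z : d₂(x, z) ≤ r} with the metric d₂ is at most 3ε. -/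
/-!
The segment property lets one push a point lying within `r + ε` of a centre back into the closed
`r`-ball while moving it by at most `ε`. Hence every point of either ball is matched with a point
of the other ball that is `ε`-close after transport by `e`, and the relation of such matched pairs
is a correspondence between the balls of distortion at most `3 ε`. Gluing the two balls along it
bounds their Gromov–Hausdorff distance by half the distortion.
-/

open Metric Function GromovHausdorff

theorem SegmentProperty.exists_mem_closedBall_dist_le {X : Type*} [MetricSpace X]
    (hX : SegmentProperty X) {c z : X} {r δ : ℝ} (hr : 0 ≤ r) (hδ : 0 ≤ δ)
    (hz : dist c z ≤ r + δ) : ∃ p ∈ closedBall c r, dist p z ≤ δ := by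
  rcases le_or_gt (dist c z) r with hzr | hzr
  · exact ⟨z, mem_closedBall'.mpr hzr, by simpa using hδ⟩
  · obtain ⟨p, hcp, hpz⟩ := hX c z r hr hzr.le
    exact ⟨p, mem_closedBall'.mpr hcp.le, by linarith⟩

theorem ghDist_le_of_correspondence {X Y Z : Type*} [MetricSpace X] [CompactSpace X] [Nonempty X]
    [MetricSpace Y] [CompactSpace Y] [Nonempty Y] {Φ : Z → X} {Ψ : Z → Y}
    (hΦ : Surjective Φ) (hΨ : Surjective Ψ) {η : ℝ}
    (H : ∀ p q, |dist (Φ p) (Φ q) - dist (Ψ p) (Ψ q)| ≤ 2 * η) : ghDist X Y ≤ η := by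
  obtain ⟨z, -⟩ := hΦ (Classical.arbitrary X)
  have : Nonempty Z := ⟨z⟩
  have hη : 0 ≤ η := by linarith [(abs_nonneg _).trans (H z z)]
  refine le_of_forall_pos_le_add fun δ hδ => ?_
  let _ : MetricSpace (X ⊕ Y) :=
    glueMetricApprox Φ Ψ (η + δ) (by linarith) fun p q => (H p q).trans (by linarith)
  refine (ghDist_le_hausdorffDist (Φ := Sum.inl) (Ψ := Sum.inr)
    (Isometry.of_dist_eq fun _ _ => rfl) (Isometry.of_dist_eq fun _ _ => rfl)).trans
    (hausdorffDist_le_of_mem_dist (by linarith) ?_ ?_)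
  · rintro _ ⟨x, rfl⟩
    obtain ⟨p, rfl⟩ := hΦ x
    exact ⟨_, Set.mem_range_self (Ψ p), (glueDist_glued_points Φ Ψ _ p).le⟩
  · rintro _ ⟨y, rfl⟩
    obtain ⟨p, rfl⟩ := hΨ y
    refine ⟨_, Set.mem_range_self (Φ p), ?_⟩
    rw [dist_comm]
    exact (glueDist_glued_points Φ Ψ _ p).le

section Matching

variable {X Y : Type*} [MetricSpace X] [MetricSpace Y] {e : X → Y} {ε : ℝ}

/-- Moving `(u, v)` and `(u', v')` to `(w, e w)` and `(w', e w')` costs `ε` each, and `e` distorts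
`dist w w'` by at most `ε` more. -/
theorem abs_dist_sub_dist_le_of_matched (he : ∀ w w', |dist w w' - dist (e w) (e w')| ≤ ε)
    {u u' w w' : X} {v v' : Y} (h : dist u w + dist (e w) v ≤ ε)
    (h' : dist u' w' + dist (e w') v' ≤ ε) : |dist u u' - dist v v'| ≤ 3 * ε := by
  have hX := dist_dist_dist_le u u' w w'
  have hY := dist_dist_dist_le (e w) (e w') v v'
  rw [Real.dist_eq, abs_le] at hX hY
  have hw := abs_le.mp (he w w')
  rw [abs_le]
  constructor <;> linarith [dist_comm w' u']

theorem ghDist_le_of_forall_exists_matched (he : ∀ w w', |dist w w' - dist (e w) (e w')| ≤ ε)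
    {A : Set X} {B : Set Y} [CompactSpace A] [Nonempty A] [CompactSpace B] [Nonempty B]
    (hA : ∀ a ∈ A, ∃ b ∈ B, ∃ w, dist a w + dist (e w) b ≤ ε)
    (hB : ∀ b ∈ B, ∃ a ∈ A, ∃ w, dist a w + dist (e w) b ≤ ε) :
    ghDist A B ≤ 3 * ε / 2 := by
  let Z := {p : A × B // ∃ w, dist (p.1 : X) w + dist (e w) p.2 ≤ ε}
  refine ghDist_le_of_correspondence (Φ := fun p : Z => p.1.1) (Ψ := fun p : Z => p.1.2) ?_ ?_
    fun p q => ?_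
  · rintro ⟨a, ha⟩
    obtain ⟨b, hb, hab⟩ := hA a ha
    exact ⟨⟨(⟨a, ha⟩, ⟨b, hb⟩), hab⟩, rfl⟩
  · rintro ⟨b, hb⟩
    obtain ⟨a, ha, hab⟩ := hB b hb
    exact ⟨⟨(⟨a, ha⟩, ⟨b, hb⟩), hab⟩, rfl⟩
  · obtain ⟨w, hp⟩ := p.2
    obtain ⟨w', hq⟩ := q.2
    exact (abs_dist_sub_dist_le_of_matched he hp hq).trans_eq (by ring)

end Matching

theorem stmt_15_general (X : Type) (Y : Type) [MetricSpace X] [MetricSpace Y]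
    [CompactSpace X] [CompactSpace Y]
    (hsegX : SegmentProperty X) (hsegY : SegmentProperty Y)
    (e : X ≃ Y) (ε : ℝ) (hε : 0 ≤ ε)
    (hclose : ∀ x y : X, |dist x y - dist (e x) (e y)| ≤ ε) :
    ∀ (x : X) (r : ℝ) (hr : 0 < r),
      haveI hcX : CompactSpace (Metric.closedBall x r) :=
        isCompact_iff_compactSpace.mp Metric.isClosed_closedBall.isCompact
      haveI hcY : CompactSpace (Metric.closedBall (e x) r) :=
        isCompact_iff_compactSpace.mp Metric.isClosed_closedBall.isCompact
      haveI hnX : Nonempty (Metric.closedBall x r) :=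
        ⟨⟨x, Metric.mem_closedBall_self hr.le⟩⟩
      haveI hnY : Nonempty (Metric.closedBall (e x) r) :=
        ⟨⟨e x, Metric.mem_closedBall_self hr.le⟩⟩
      GromovHausdorff.ghDist (Metric.closedBall x r) (Metric.closedBall (e x) r) ≤
        3 * ε := by
  intro x r hr
  have : Nonempty (closedBall x r) := ⟨⟨x, mem_closedBall_self hr.le⟩⟩
  have : Nonempty (closedBall (e x) r) := ⟨⟨e x, mem_closedBall_self hr.le⟩⟩
  refine (ghDist_le_of_forall_exists_matched hclose ?_ ?_).trans (by linarith)
  · intro a ha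
    have hxa : dist (e x) (e a) ≤ r + ε := by
      linarith [(abs_le.mp (hclose x a)).1, mem_closedBall'.mp ha]
    obtain ⟨b, hb, hab⟩ := hsegY.exists_mem_closedBall_dist_le hr.le hε hxa
    exact ⟨b, hb, a, by simpa [dist_comm] using hab⟩
  · intro b hb
    have hxb : dist x (e.symm b) ≤ r + ε := by
      have := (abs_le.mp (hclose x (e.symm b))).2
      rw [e.apply_symm_apply] at this
      linarith [mem_closedBall'.mp hb]
    obtain ⟨a, ha, hab⟩ := hsegX.exists_mem_closedBall_dist_le hr.le hε hxb
    exact ⟨a, ha, e.symm b, by simpa using hab⟩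

/-- Let a nonempty set carry two metrics `d₁`, `d₂` (encoded as two compact
metric spaces `X`, `Y` with the segment property, identified by a bijection `e : X ≃ Y`) with
`|d₁(x, y) − d₂(x, y)| ≤ ε` for all `x, y`. Then for every `x` and every `r > 0`, the
Gromov–Hausdorff distance between the closed `d₁`-ball of radius `r` about `x` and the closed
`d₂`-ball of radius `r` about `e x` is at most `3 ε`. -/
theorem stmt_15 (X : Type) (Y : Type) [MetricSpace X] [MetricSpace Y]
    [CompactSpace X] [CompactSpace Y] [Nonempty X]
    (hsegX : SegmentProperty X) (hsegY : SegmentProperty Y)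
    (e : X ≃ Y) (ε : ℝ) (hε : 0 ≤ ε)
    (hclose : ∀ x y : X, |dist x y - dist (e x) (e y)| ≤ ε) :
    ∀ (x : X) (r : ℝ) (hr : 0 < r),
      haveI hcX : CompactSpace (Metric.closedBall x r) :=
        isCompact_iff_compactSpace.mp Metric.isClosed_closedBall.isCompact
      haveI hcY : CompactSpace (Metric.closedBall (e x) r) :=
        isCompact_iff_compactSpace.mp Metric.isClosed_closedBall.isCompact
      haveI hnX : Nonempty (Metric.closedBall x r) :=
        ⟨⟨x, Metric.mem_closedBall_self hr.le⟩⟩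
      haveI hnY : Nonempty (Metric.closedBall (e x) r) :=
        ⟨⟨e x, Metric.mem_closedBall_self hr.le⟩⟩
      GromovHausdorff.ghDist (Metric.closedBall x r) (Metric.closedBall (e x) r) ≤
        3 * ε :=
  stmt_15_general X Y hsegX hsegY e ε hε hclose
end
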